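/- Let G be a finite group, let A be a normal subgroup of G which is an internal direct product of non-abelian simple subgroups, and let B be a subnormal subgroup of G with B ≤ A such that B is a non-abelian simple group. Then the normal closure B^G of B in G is a minimal normal subgroup of G contained in A, and A is the internal direct product of B^G and C_A(B^G). -/

import Mathlib

/-! Common definitions: chief factors, G-isomorphism of chief factors, chief factor
functions, the class `C(f)`, classes of finite groups, formations, residuals,
relative centralizers, internal direct products, minimal normal subgroups,
(K-)𝔉-subnormality. -/

/-- Conjugate of an element of a normal subgroup, as an element of the subgroup. -/
def normalConj {G : Type} [Group G] {H : Subgroup G} (hH : H.Normal) (g : G) (x : ↥H) : ↥H :=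
  ⟨g * ↑x * g⁻¹, hH.conj_mem ↑x x.2 g⟩

/-- `H/K` is a chief factor of `G`: both are normal in `G`, `K < H`, and no normal
subgroup of `G` lies strictly between them. -/
def IsChiefFactor (G : Type) [Group G] (H K : Subgroup G) : Prop :=
  H.Normal ∧ K.Normal ∧ K < H ∧
    ∀ L : Subgroup G, L.Normal → K < L → L < H → False

/-- The factors `H/K` and `M/N` are `G`-isomorphic (auxiliary version taking normality
proofs): there is a group isomorphism `φ : H/K ≃* M/N` commuting with the conjugation
action of `G` on both factors. -/
def GIsoAux (G : Type) [Group G] (H K M N : Subgroup G)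
    (hH : H.Normal) (hK : K.Normal) (hM : M.Normal) (hN : N.Normal) : Prop :=
  haveI := hK.subgroupOf H
  haveI := hN.subgroupOf M
  ∃ φ : (↥H ⧸ K.subgroupOf H) ≃* (↥M ⧸ N.subgroupOf M),
    ∀ (g : G) (x : ↥H) (y : ↥M),
      φ (QuotientGroup.mk x) = QuotientGroup.mk y →
        φ (QuotientGroup.mk (normalConj hH g x)) = QuotientGroup.mk (normalConj hM g y)

/-- The factors `H/K` and `M/N` are `G`-isomorphic. -/
def IsGIsomorphicFactors (G : Type) [Group G] (H K M N : Subgroup G) : Prop :=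
  ∃ (hH : H.Normal) (hK : K.Normal) (hM : M.Normal) (hN : N.Normal),
    GIsoAux G H K M N hH hK hM hN

/-- The type of functions assigning a Boolean value (`true` = 1, `false` = 0) to each
finite group `G` and pair of subgroups `H`, `K` (thought of as the factor `H/K`). -/
abbrev ChiefFactorFun : Type 1 :=
  ∀ (G : Type) [Group G] [Finite G], Subgroup G → Subgroup G → Bool

/-- `f` is a chief factor function: it is invariant under `G`-isomorphism of chief
factors and compatible with quotients. -/
structure IsChiefFactorFun (f : ChiefFactorFun) : Prop where
  iso_inv : ∀ (G : Type) [Group G] [Finite G] (H K M N : Subgroup G),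
    IsChiefFactor G H K → IsChiefFactor G M N → IsGIsomorphicFactors G H K M N →
      f G H K = f G M N
  quot_inv : ∀ (G : Type) [Group G] [Finite G] (H K N : Subgroup G) [N.Normal],
    IsChiefFactor G H K → N ≤ K →
      f G H K = f (G ⧸ N) (H.map (QuotientGroup.mk' N)) (K.map (QuotientGroup.mk' N))

/-- `G ∈ C(f)`: every chief factor of `G` has value 1 under `f`. -/
def CClass (f : ChiefFactorFun) (G : Type) [Group G] [Finite G] : Prop :=
  ∀ H K : Subgroup G, IsChiefFactor G H K → f G H K = true

/-- `G/L ∈ C(f)`, for a normal subgroup `L` of `G`. -/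
def CClassQuot (f : ChiefFactorFun) (G : Type) [Group G] [Finite G]
    (L : Subgroup G) (hL : L.Normal) : Prop :=
  haveI := hL
  CClass f (G ⧸ L)

open scoped commutatorElement

/-- The centralizer `C_G(H/K) = {g : G | [g,h] ∈ K for all h ∈ H}` of the factor
`H/K` in `G` (for `K` normal in `G`). -/
def relCentralizer {G : Type} [Group G] (H K : Subgroup G) (hK : K.Normal) : Subgroup G where
  carrier := {g : G | ∀ x ∈ H, ⁅g, x⁆ ∈ K}
  one_mem' := by
    intro x hx
    have h1 : ⁅(1 : G), x⁆ = 1 := by group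
    rw [h1]; exact K.one_mem
  mul_mem' := by
    intro a b ha hb x hx
    have h1 : ⁅a * b, x⁆ = a * ⁅b, x⁆ * a⁻¹ * ⁅a, x⁆ := by group
    rw [h1]
    exact K.mul_mem (hK.conj_mem _ (hb x hx) a) (ha x hx)
  inv_mem' := by
    intro a ha x hx
    have h1 : ⁅a⁻¹, x⁆ = a⁻¹ * ⁅a, x⁆⁻¹ * a⁻¹⁻¹ := by group
    rw [h1]
    exact hK.conj_mem _ (K.inv_mem (ha x hx)) a⁻¹

/-- A class of finite groups, given as a predicate on finite group types. -/
abbrev GroupClass : Type 1 := ∀ (G : Type) [Group G] [Finite G], Prop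

/-- The class `𝔛` is non-empty. -/
def GroupClassNonempty (𝔛 : GroupClass) : Prop :=
  ∃ (G : Type) (g : Group G) (f : Finite G), @𝔛 G g f

/-- `G/L ∈ 𝔛`, for a normal subgroup `L` of `G`. -/
def QuotientIn (𝔛 : GroupClass) (G : Type) [Group G] [Finite G]
    (L : Subgroup G) (hL : L.Normal) : Prop :=
  haveI := hL
  𝔛 (G ⧸ L)

/-- `𝔛` is a formation: a class of finite groups (closed under isomorphism) which is
closed under taking quotients and under subdirect products. -/
structure IsFormation (𝔛 : GroupClass) : Prop where
  iso_closed : ∀ (G : Type) [Group G] [Finite G] (H : Type) [Group H] [Finite H],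
    (G ≃* H) → 𝔛 G → 𝔛 H
  quot_closed : ∀ (G : Type) [Group G] [Finite G] (N : Subgroup G) [N.Normal],
    𝔛 G → 𝔛 (G ⧸ N)
  subdirect_closed : ∀ (G : Type) [Group G] [Finite G] (N M : Subgroup G)
    [N.Normal] [M.Normal], N ⊓ M = ⊥ → 𝔛 (G ⧸ N) → 𝔛 (G ⧸ M) → 𝔛 G

/-- `𝔛` is hereditary: closed under taking subgroups. -/
def IsHereditary (𝔛 : GroupClass) : Prop :=
  ∀ (G : Type) [Group G] [Finite G], 𝔛 G → ∀ H : Subgroup G, 𝔛 ↥H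

/-- `R` is the `𝔛`-residual of `G`: the smallest normal subgroup of `G` whose
quotient lies in `𝔛`. -/
def IsResidual (𝔛 : GroupClass) (G : Type) [Group G] [Finite G] (R : Subgroup G) : Prop :=
  ∃ hR : R.Normal, QuotientIn 𝔛 G R hR ∧
    ∀ (L : Subgroup G) (hL : L.Normal), QuotientIn 𝔛 G L hL → R ≤ L

/-- `A` is the internal direct product of the family of subgroups `B i`: each `B i`
is a subgroup of `A` normal in `A`, together they generate `A`, and each of them
intersects the subgroup generated by the others trivially. -/
def IsInternalDirectProduct {G : Type} [Group G] (A : Subgroup G)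
    {ι : Type} (B : ι → Subgroup G) : Prop :=
  (∀ i, B i ≤ A) ∧ (∀ i, ((B i).subgroupOf A).Normal) ∧ (⨆ i, B i) = A ∧
    ∀ i, B i ⊓ (⨆ (j) (_ : j ≠ i), B j) = ⊥

/-- A non-abelian simple group. -/
def IsNonabelianSimple (S : Type) [Group S] : Prop :=
  IsSimpleGroup S ∧ ∃ x y : S, x * y ≠ y * x

/-- `A` is a minimal normal subgroup of `G`. -/
def IsMinimalNormal {G : Type} [Group G] (A : Subgroup G) : Prop :=
  A.Normal ∧ A ≠ ⊥ ∧ ∀ B : Subgroup G, B.Normal → B ≤ A → B ≠ ⊥ → B = A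

/-- `H` is a subnormal subgroup of `G`. -/
def IsSubnormal (G : Type) [Group G] (H : Subgroup G) : Prop :=
  ∃ (n : ℕ) (c : ℕ → Subgroup G), c 0 = H ∧ c n = ⊤ ∧
    ∀ i < n, c i ≤ c (i + 1) ∧ ((c i).subgroupOf (c (i + 1))).Normal

/-- One step in a K-`𝔉`-subnormal chain: `A ≤ B`, and either `A` is normal in `B` or
`B / Core_B(A) ∈ 𝔉`. -/
def KFStep (𝔛 : GroupClass) {G : Type} [Group G] [Finite G] (A B : Subgroup G) : Prop :=
  A ≤ B ∧ ((A.subgroupOf B).Normal ∨ 𝔛 (↥B ⧸ (A.subgroupOf B).normalCore))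

/-- `H` is a K-`𝔉`-subnormal subgroup of `G`. -/
def IsKFSubnormal (𝔛 : GroupClass) (G : Type) [Group G] [Finite G] (H : Subgroup G) : Prop :=
  ∃ (n : ℕ) (c : ℕ → Subgroup G), c 0 = H ∧ c n = ⊤ ∧
    ∀ i < n, KFStep 𝔛 (c i) (c (i + 1))

/-- One step in an `𝔉`-subnormal chain (for hereditary `𝔉`): `A < B` and
`B / Core_B(A) ∈ 𝔉`. -/
def FStep (𝔛 : GroupClass) {G : Type} [Group G] [Finite G] (A B : Subgroup G) : Prop :=
  A < B ∧ 𝔛 (↥B ⧸ (A.subgroupOf B).normalCore)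

/-- `H` is an `𝔉`-subnormal subgroup of `G` (for hereditary `𝔉`). -/
def IsFSubnormal (𝔛 : GroupClass) (G : Type) [Group G] [Finite G] (H : Subgroup G) : Prop :=
  H = ⊤ ∨ ∃ (n : ℕ) (c : ℕ → Subgroup G), c 0 = H ∧ c n = ⊤ ∧
    ∀ i < n, FStep 𝔛 (c i) (c (i + 1))

/- A subnormal subgroup of a product of non-abelian simple groups is itself a product of some of the
factors: a subgroup normalized by such a product centralizes every factor it does not contain
(the intersection is a normal subgroup of a simple factor), and the product of the remaining
factors is centerless, so the subgroup is the product of the factors it contains. Going down a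
subnormal series shows that `B` is a product of factors, hence normalized by `A`. A normal
subgroup `N ≤ B^G` meeting `B` trivially would then centralize `B`, hence all of `B^G`, and so lie
in the trivial center of `B^G`; thus `B ≤ N`. Finally `B^G` is the product of the factors
it contains, and the remaining factors make up `C_A(B^G)`. -/

open Subgroup

theorem IsSubnormal.induction {G : Type} [Group G] {P : Subgroup G → Prop} {H : Subgroup G}
    (hH : IsSubnormal G H) (top : P ⊤)
    (step : ∀ K L : Subgroup G, K ≤ L → (K.subgroupOf L).Normal → P L → P K) : P H := by
  obtain ⟨n, c, rfl, hcn, hc⟩ := hH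
  suffices ∀ j ≤ n, P (c (n - j)) by simpa using this n le_rfl
  intro j
  induction j with
  | zero => simpa [hcn] using top
  | succ j ih =>
    intro hj
    have hsucc : n - (j + 1) + 1 = n - j := by omega
    obtain ⟨hle, hnorm⟩ := hc (n - (j + 1)) (by omega)
    rw [hsucc] at hle hnorm
    exact step _ _ hle hnorm (ih (by omega))

section Factors

variable {G : Type} [Group G]

theorem IsNonabelianSimple.ne_bot {H : Subgroup G} (hH : IsNonabelianSimple H) : H ≠ ⊥ := by
  rintro rfl
  obtain ⟨-, x, y, hxy⟩ := hH
  exact hxy (Subsingleton.elim _ _)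

theorem IsNonabelianSimple.disjoint_centralizer {H : Subgroup G} (hH : IsNonabelianSimple H) :
    Disjoint H (centralizer (H : Set G)) := by
  obtain ⟨hsimple, x, y, hxy⟩ := hH
  rw [disjoint_def]
  intro z hzH hzc
  have hz : (⟨z, hzH⟩ : H) ∈ center H :=
    mem_center_iff.mpr fun g => Subtype.ext (mem_centralizer_iff.mp hzc g g.2)
  rcases hsimple.eq_bot_or_eq_top_of_normal (center H) inferInstance with h | h
  · simpa [h] using hz
  · exact absurd (mem_center_iff.mp (h ▸ mem_top x) y).symm hxy

theorem eq_bot_or_eq_of_le_normalizer {H K : Subgroup G} (hH : IsSimpleGroup H) (hKH : K ≤ H)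
    (hHK : H ≤ normalizer (K : Set G)) : K = ⊥ ∨ K = H := by
  have hnorm := (normal_subgroupOf_iff_le_normalizer hKH).mpr hHK
  rcases hH.eq_bot_or_eq_top_of_normal _ hnorm with h | h
  · exact .inl ((subgroupOf_eq_bot.mp h).eq_bot_of_le hKH)
  · exact .inr (le_antisymm hKH (subgroupOf_eq_top.mp h))

theorem le_centralizer_of_disjoint {H K : Subgroup G} (hd : Disjoint H K)
    (hHK : H ≤ normalizer (K : Set G)) (hKH : K ≤ normalizer (H : Set G)) :
    H ≤ centralizer (K : Set G) := by
  intro x hx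
  rw [mem_centralizer_iff_commutator_eq_one]
  intro y hy
  refine disjoint_def.mp hd ?_ ?_
  · exact mul_mem ((mem_normalizer_iff.mp (hKH hy) x).mp hx) (inv_mem hx)
  · simpa only [commutatorElement_def, mul_assoc] using
      mul_mem hy ((mem_normalizer_iff.mp (hHK hx) y⁻¹).mp (inv_mem hy))

theorem le_normalizer_biSup {ι : Type*} {S : ι → Subgroup G} {U : Set ι} {H : Subgroup G}
    (h : ∀ i ∈ U, H ≤ normalizer (S i : Set G)) :
    H ≤ normalizer ((⨆ i ∈ U, S i : Subgroup G) : Set G) :=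
  (le_iInf₂ h).trans <| (iInf_mono fun _ => iInf_normalizer_le_normalizer_iSup _).trans
    (iInf_normalizer_le_normalizer_iSup _)

variable {ι : Type*} {S : ι → Subgroup G}
  (hcomm : Pairwise fun i j => S i ≤ centralizer (S j : Set G))
include hcomm

theorem biSup_le_normalizer (U : Set ι) (j : ι) :
    ⨆ i ∈ U, S i ≤ normalizer (S j : Set G) := by
  refine iSup₂_le fun i _ => ?_
  rcases eq_or_ne i j with rfl | hij
  · exact le_normalizer
  · exact (hcomm hij).trans (centralizer_le_normalizer _)

theorem biSup_le_centralizer {U : Set ι} {j : ι} (hj : j ∉ U) :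
    ⨆ i ∈ U, S i ≤ centralizer (S j : Set G) :=
  iSup₂_le fun _ hi => hcomm (ne_of_mem_of_not_mem hi hj)

theorem eq_one_of_mem_biSup_of_mem_centralizer
    (hZ : ∀ i, Disjoint (S i) (centralizer (S i : Set G))) {U : Set ι} (hU : U.Finite) {z : G}
    (hz : z ∈ ⨆ i ∈ U, S i) (hzc : ∀ i ∈ U, z ∈ centralizer (S i : Set G)) : z = 1 := by
  induction U, hU using Set.Finite.induction_on generalizing z with
  | empty => simpa using hz
  | @insert a U ha _ ih =>
    rw [iSup_insert, ← SetLike.mem_coe,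
      coe_mul_of_right_le_normalizer_left _ _ (biSup_le_normalizer hcomm U a)] at hz
    obtain ⟨s, hs, m, hm, rfl⟩ := Set.mem_mul.mp hz
    have hmc : m ∈ centralizer (S a : Set G) := biSup_le_centralizer hcomm ha hm
    have hs1 : s = 1 := by
      refine disjoint_def.mp (hZ a) hs ?_
      simpa using mul_mem (hzc a (Set.mem_insert a U)) (inv_mem hmc)
    subst hs1
    rw [one_mul] at hzc ⊢
    exact ih hm fun i hi => hzc i (Set.mem_insert_of_mem a hi)

theorem disjoint_biSup_centralizer (hZ : ∀ i, Disjoint (S i) (centralizer (S i : Set G)))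
    {U : Set ι} (hU : U.Finite) :
    Disjoint (⨆ i ∈ U, S i) (centralizer ((⨆ i ∈ U, S i : Subgroup G) : Set G)) :=
  disjoint_def.mpr fun hz hzc => eq_one_of_mem_biSup_of_mem_centralizer hcomm hZ hU hz
    fun _ hi => centralizer_le (le_biSup S hi) hzc

theorem eq_biSup_of_le_normalizer [Finite ι] (hS : ∀ i, IsNonabelianSimple (S i)) {U : Set ι}
    {N : Subgroup G} (hNU : N ≤ ⨆ i ∈ U, S i)
    (hUN : ⨆ i ∈ U, S i ≤ normalizer (N : Set G)) :
    N = ⨆ i ∈ {i | i ∈ U ∧ S i ≤ N}, S i := by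
  refine le_antisymm ?_ (iSup₂_le fun i hi => hi.2)
  set M := ⨆ i ∈ {i | i ∈ U ∧ S i ≤ N}, S i
  set M' := ⨆ i ∈ {i | i ∈ U ∧ ¬S i ≤ N}, S i
  have hN_centralizes : ∀ i ∈ U, ¬S i ≤ N → N ≤ centralizer (S i : Set G) := by
    intro i hi hiN
    have hSi : S i ≤ normalizer ((S i ⊓ N : Subgroup G) : Set G) :=
      (le_inf le_normalizer ((le_biSup S hi).trans hUN)).trans inf_normalizer_le_normalizer_inf
    refine le_centralizer_of_disjoint ?_ (hNU.trans (biSup_le_normalizer hcomm U i))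
      ((le_biSup S hi).trans hUN)
    rcases eq_bot_or_eq_of_le_normalizer (hS i).1 inf_le_left hSi with h | h
    · exact disjoint_iff.mpr (inf_comm N (S i) ▸ h)
    · exact absurd (h ▸ inf_le_right) hiN
  intro n hn
  have hnMM' : n ∈ M ⊔ M' := by
    refine (hNU.trans (iSup₂_le fun i hi => ?_)) hn
    by_cases hiN : S i ≤ N
    · exact le_sup_of_le_left (le_biSup S (s := {i | i ∈ U ∧ S i ≤ N}) ⟨hi, hiN⟩)
    · exact le_sup_of_le_right (le_biSup S (s := {i | i ∈ U ∧ ¬S i ≤ N}) ⟨hi, hiN⟩)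
  rw [← SetLike.mem_coe, coe_mul_of_left_le_normalizer_right _ _
    (le_normalizer_biSup fun i _ => biSup_le_normalizer hcomm _ i)] at hnMM'
  obtain ⟨m, hm, m', hm', rfl⟩ := Set.mem_mul.mp hnMM'
  have hm'N : m' ∈ N := by
    simpa using mul_mem (inv_mem ((iSup₂_le fun i hi => hi.2 : M ≤ N) hm)) hn
  have hm'1 : m' = 1 :=
    eq_one_of_mem_biSup_of_mem_centralizer hcomm (fun i => (hS i).disjoint_centralizer)
      (Set.toFinite _) hm' fun i hi => hN_centralizes i hi.1 hi.2 hm'N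
  rw [hm'1, mul_one]
  exact hm

theorem exists_eq_biSup_of_isSubnormal [Finite ι] (hS : ∀ i, IsNonabelianSimple (S i))
    {B : Subgroup G} (hB : IsSubnormal G B) (hBS : B ≤ ⨆ i, S i) :
    ∃ U : Set ι, B = ⨆ i ∈ U, S i := by
  have key : ∃ U : Set ι, B ⊓ ⨆ i, S i = ⨆ i ∈ U, S i := by
    refine hB.induction (P := fun H => ∃ U : Set ι, H ⊓ ⨆ i, S i = ⨆ i ∈ U, S i)
      ⟨Set.univ, by rw [top_inf_eq, iSup_univ]⟩ ?_
    rintro K L hKL hKnorm ⟨U, hU⟩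
    refine ⟨_, eq_biSup_of_le_normalizer hcomm hS (hU ▸ inf_le_inf_right _ hKL) ?_⟩
    rw [← hU]
    exact (inf_le_inf ((normal_subgroupOf_iff_le_normalizer hKL).mp hKnorm) le_normalizer).trans
      inf_normalizer_le_normalizer_inf
  simpa only [inf_eq_left.mpr hBS] using key

end Factors

section DirectProduct

variable {G : Type} [Group G] {A : Subgroup G}

theorem IsInternalDirectProduct.le_normalizer {ι : Type} {S : ι → Subgroup G}
    (h : IsInternalDirectProduct A S) (i : ι) : A ≤ normalizer (S i : Set G) :=
  (normal_subgroupOf_iff_le_normalizer (h.1 i)).mp (h.2.1 i)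

theorem IsInternalDirectProduct.pairwise_le_centralizer {ι : Type} {S : ι → Subgroup G}
    (h : IsInternalDirectProduct A S) : Pairwise fun i j => S i ≤ centralizer (S j : Set G) := by
  intro i j hij
  have hd : Disjoint (S i) (S j) :=
    (disjoint_iff.mpr (h.2.2.2 i)).mono_right (le_biSup S hij.symm)
  exact le_centralizer_of_disjoint hd ((h.1 i).trans (h.le_normalizer j))
    ((h.1 j).trans (h.le_normalizer i))

theorem IsInternalDirectProduct.finite_of_ne_bot [Finite G] {ι : Type} {S : ι → Subgroup G}
    (h : IsInternalDirectProduct A S) (hS : ∀ i, S i ≠ ⊥) : Finite ι :=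
  Finite.of_injective S <| iSupIndep.injective (fun i => disjoint_iff.mpr (h.2.2.2 i)) hS

theorem isInternalDirectProduct_pair {H K : Subgroup G} (hHA : H ≤ A) (hKA : K ≤ A)
    (hH : A ≤ normalizer (H : Set G)) (hK : A ≤ normalizer (K : Set G)) (hsup : H ⊔ K = A)
    (hd : Disjoint H K) : IsInternalDirectProduct A ![H, K] := by
  refine ⟨Fin.forall_fin_two.mpr ⟨hHA, hKA⟩,
    Fin.forall_fin_two.mpr ⟨(normal_subgroupOf_iff_le_normalizer hHA).mpr hH,
      (normal_subgroupOf_iff_le_normalizer hKA).mpr hK⟩, ?_, fun i => disjoint_iff.mp ?_⟩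
  · rw [← hsup]
    exact le_antisymm (iSup_le (Fin.forall_fin_two.mpr ⟨le_sup_left, le_sup_right⟩))
      (sup_le (le_iSup ![H, K] 0) (le_iSup ![H, K] 1))
  · exact (iSupIndep_pair zero_ne_one (fun k => by fin_cases k <;> simp)).mpr hd i

theorem isInternalDirectProduct_centralizer [A.Normal] {ι : Type} {S : ι → Subgroup G}
    (h : IsInternalDirectProduct A S) (hZ : ∀ i, Disjoint (S i) (centralizer (S i : Set G)))
    {R : Subgroup G} [R.Normal] {T : Set ι} (hT : T.Finite) (hRT : R = ⨆ i ∈ T, S i) :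
    IsInternalDirectProduct A ![R, A ⊓ centralizer (R : Set G)] := by
  have hcomm := h.pairwise_le_centralizer
  have hRA : R ≤ A := hRT ▸ iSup₂_le fun i _ => h.1 i
  refine isInternalDirectProduct_pair hRA inf_le_left le_normalizer_of_normal
    le_normalizer_of_normal (le_antisymm (sup_le hRA inf_le_left) ?_) ?_
  · refine h.2.2.1.symm.trans_le (iSup_le fun i => ?_)
    by_cases hi : i ∈ T
    · exact le_sup_of_le_left (hRT ▸ le_biSup S hi)
    · exact le_sup_of_le_right (le_inf (h.1 i)
        (le_centralizer_iff.mp (hRT ▸ biSup_le_centralizer hcomm hi)))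
  · subst hRT
    exact (disjoint_biSup_centralizer hcomm hZ hT).mono_right inf_le_right

end DirectProduct

theorem isMinimalNormal_normalClosure {G : Type} [Group G] {B : Subgroup G}
    (hB : IsSimpleGroup B) (hBR : normalClosure (B : Set G) ≤ normalizer (B : Set G))
    (hR : Disjoint (normalClosure (B : Set G))
      (centralizer (normalClosure (B : Set G) : Set G))) :
    IsMinimalNormal (normalClosure (B : Set G)) := by
  have hBle : B ≤ normalClosure (B : Set G) := fun _ hx => subset_normalClosure hx
  refine ⟨normalClosure_normal, fun hR0 => ?_, fun N hN hNR hN0 => ?_⟩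
  · exact (nontrivial_iff_ne_bot B).mp hB.toNontrivial (le_bot_iff.mp (hR0 ▸ hBle))
  have hBN : B ≤ N := by
    have hBBN : B ≤ normalizer ((B ⊓ N : Subgroup G) : Set G) :=
      (le_inf le_normalizer le_normalizer_of_normal).trans inf_normalizer_le_normalizer_inf
    rcases eq_bot_or_eq_of_le_normalizer hB inf_le_left hBBN with h | h
    · have hBc : B ≤ centralizer (N : Set G) :=
        le_centralizer_of_disjoint (disjoint_iff.mpr h) le_normalizer_of_normal (hNR.trans hBR)
      have hNc : N ≤ centralizer (normalClosure (B : Set G) : Set G) :=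
        le_centralizer_iff.mp (normalClosure_le_normal hBc)
      exact absurd (disjoint_self.mp (hR.mono hNR hNc)) hN0
    · exact h ▸ inf_le_right
  exact le_antisymm hNR (normalClosure_le_normal hBN)

/-- Let `A` be a normal subgroup of a finite group `G` which is an
internal direct product of non-abelian simple subgroups, and let `B ≤ A` be a
subnormal subgroup of `G` which is non-abelian simple. Then `B^G` is a minimal
normal subgroup of `G` contained in `A`, and `A` is the internal direct product of
`B^G` and `C_A(B^G)`. -/
theorem stmt6 (G : Type) [Group G] [Finite G] (A : Subgroup G) (hA : A.Normal)
    (ι : Type) (S : ι → Subgroup G) (hS : ∀ i, IsNonabelianSimple ↥(S i))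
    (hdp : IsInternalDirectProduct A S)
    (B : Subgroup G) (hBA : B ≤ A) (hBsn : IsSubnormal G B)
    (hBsimple : IsNonabelianSimple ↥B) :
    IsMinimalNormal (Subgroup.normalClosure (B : Set G)) ∧
    Subgroup.normalClosure (B : Set G) ≤ A ∧
    IsInternalDirectProduct A
      ![Subgroup.normalClosure (B : Set G),
        A ⊓ Subgroup.centralizer (Subgroup.normalClosure (B : Set G) : Set G)] := by
  have := hA
  have hcomm := hdp.pairwise_le_centralizer
  have hZ i := (hS i).disjoint_centralizer
  have : Finite ι := hdp.finite_of_ne_bot fun i => (hS i).ne_bot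
  have hSA : ⨆ i, S i = A := hdp.2.2.1
  have hRA : normalClosure (B : Set G) ≤ A := normalClosure_le_normal hBA
  obtain ⟨U, hBU⟩ := exists_eq_biSup_of_isSubnormal hcomm hS hBsn (hSA ▸ hBA)
  have hAB : A ≤ normalizer (B : Set G) := by
    rw [hBU]
    exact le_normalizer_biSup fun i _ => hdp.le_normalizer i
  obtain ⟨T, hRT⟩ : ∃ T : Set ι, normalClosure (B : Set G) = ⨆ i ∈ T, S i :=
    ⟨_, eq_biSup_of_le_normalizer hcomm hS (U := Set.univ) (by rwa [iSup_univ, hSA])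
      (by rw [iSup_univ, hSA]; exact le_normalizer_of_normal)⟩
  refine ⟨isMinimalNormal_normalClosure hBsimple.1 (hRA.trans hAB) ?_, hRA,
    isInternalDirectProduct_centralizer hdp hZ (Set.toFinite T) hRT⟩
  rw [hRT]
  exact disjoint_biSup_centralizer hcomm hZ (Set.toFinite T)
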